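/- arXiv:1203.5762 — 2 statements merged into one kernel-verified Lean document; each statement's English description precedes it below -/
import Mathlib

section
/- Let K ≥ 0 and define the Rician density on ℂ by f_K(h) = ((K+1)/π) · exp(−(K+1)·|h − √(K/(K+1))|²). Let a, b ∈ ℂ with |a|² + |b|² > 0. Then lim_{ρ → ∞} ρ · ∫_ℂ ∫_ℂ exp(−(ρ/4)·|a·h_A + b·h_B|²) · f_K(h_A) · f_K(h_B) dh_A dh_B = (4·(K+1)/(|a|² + |b|²)) · exp(−K·|a + b|²/(|a|² + |b|²)). In particular, without adaptive network coding the pairwise error events decay as SNR^{−1}, with a constant proportional to exp(−K·|a + b|²/(|a|² + |b|²)). -/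
open MeasureTheory Set Filter

/-!
The Rician density is the complex Gaussian density of precision `t = K + 1` centred at
`m = √(K/(K+1))`. Completing the square shows that integrating `exp (-c‖z + w h‖²)` against
such a density returns a Gaussian factor of the same shape in `z`, so the double integral
can be evaluated in closed form by integrating out `h_B` and then `h_A`:
`t / (c s + t) · exp (-c t ‖(a + b) m‖² / (c s + t))` with `s = ‖a‖² + ‖b‖²`.
For `c = ρ / 4`, multiplying by `ρ` gives a continuous function of `4 t / ρ → 0`.
-/

/-- The Rician density with Rician factor `K` on `ℂ`:
`f_K(h) = ((K+1)/π) exp(−(K+1)|h − √(K/(K+1))|²)`. -/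
noncomputable def ricianDensity (K : ℝ) (h : ℂ) : ℝ :=
  ((K + 1) / Real.pi) *
    Real.exp (-(K + 1) * (‖h - (Real.sqrt (K / (K + 1)) : ℂ)‖) ^ 2)

/-- Completing the square in `h`. -/
lemma mul_norm_add_mul_sq_add_mul_norm_sub_sq {c t : ℝ} {w : ℂ} (hα : c * ‖w‖ ^ 2 + t ≠ 0)
    (z m h : ℂ) :
    c * ‖z + w * h‖ ^ 2 + t * ‖h - m‖ ^ 2 =
      (c * ‖w‖ ^ 2 + t) * ‖h - (t * m - c * starRingEnd ℂ w * z) / (c * ‖w‖ ^ 2 + t : ℝ)‖ ^ 2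
        + c * t * ‖z + w * m‖ ^ 2 / (c * ‖w‖ ^ 2 + t) := by
  generalize hα_def : c * ‖w‖ ^ 2 + t = α at hα ⊢
  simp only [Complex.sq_norm, Complex.normSq_apply, Complex.add_re, Complex.add_im,
    Complex.sub_re, Complex.sub_im, Complex.mul_re, Complex.mul_im, Complex.ofReal_re,
    Complex.ofReal_im, Complex.conj_re, Complex.conj_im, Complex.div_ofReal_re,
    Complex.div_ofReal_im] at hα_def ⊢
  field_simp
  subst hα_def
  ring

lemma integral_exp_neg_mul_norm_sub_sq {α : ℝ} (hα : 0 < α) (p : ℂ) :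
    ∫ h : ℂ, Real.exp (-α * ‖h - p‖ ^ 2) = Real.pi / α := by
  rw [integral_sub_right_eq_self (fun h : ℂ => Real.exp (-α * ‖h‖ ^ 2)) p,
    GaussianFourier.integral_rexp_neg_mul_sq_norm hα, Complex.finrank_real_complex]
  norm_num

noncomputable def complexGaussianDensity (t : ℝ) (m h : ℂ) : ℝ :=
  t / Real.pi * Real.exp (-t * ‖h - m‖ ^ 2)

lemma ricianDensity_eq_complexGaussianDensity (K : ℝ) :
    ricianDensity K = complexGaussianDensity (K + 1) (Real.sqrt (K / (K + 1)) : ℂ) :=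
  rfl

lemma integral_exp_neg_mul_norm_add_mul_sq_mul_complexGaussianDensity {c t : ℝ} (hc : 0 ≤ c)
    (ht : 0 < t) (z w m : ℂ) :
    ∫ h : ℂ, Real.exp (-c * ‖z + w * h‖ ^ 2) * complexGaussianDensity t m h =
      t / (c * ‖w‖ ^ 2 + t) * Real.exp (-(c * t * ‖z + w * m‖ ^ 2) / (c * ‖w‖ ^ 2 + t)) := by
  set α := c * ‖w‖ ^ 2 + t
  have hα : 0 < α := by positivity
  set u : ℂ := (t * m - c * starRingEnd ℂ w * z) / (α : ℂ)
  have hsplit : ∀ h : ℂ, Real.exp (-c * ‖z + w * h‖ ^ 2) * complexGaussianDensity t m h =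
      t / Real.pi * Real.exp (-(c * t * ‖z + w * m‖ ^ 2) / α) * Real.exp (-α * ‖h - u‖ ^ 2) := by
    intro h
    rw [complexGaussianDensity, mul_left_comm, ← Real.exp_add, mul_assoc, ← Real.exp_add]
    congr 2
    linear_combination (-1 : ℝ) * mul_norm_add_mul_sq_add_mul_norm_sub_sq hα.ne' z m h
  simp_rw [hsplit]
  rw [integral_const_mul, integral_exp_neg_mul_norm_sub_sq hα]
  field_simp

lemma integral_integral_exp_neg_mul_norm_add_sq_mul_complexGaussianDensity {c t : ℝ}
    (hc : 0 ≤ c) (ht : 0 < t) (a b mA mB : ℂ) :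
    ∫ hA : ℂ, ∫ hB : ℂ, Real.exp (-c * ‖a * hA + b * hB‖ ^ 2) *
        complexGaussianDensity t mA hA * complexGaussianDensity t mB hB =
      t / (c * (‖a‖ ^ 2 + ‖b‖ ^ 2) + t) *
        Real.exp (-(c * t * ‖a * mA + b * mB‖ ^ 2) / (c * (‖a‖ ^ 2 + ‖b‖ ^ 2) + t)) := by
  have hαB : 0 < c * ‖b‖ ^ 2 + t := by positivity
  have inner : ∀ hA : ℂ, ∫ hB : ℂ, Real.exp (-c * ‖a * hA + b * hB‖ ^ 2) *
        complexGaussianDensity t mA hA * complexGaussianDensity t mB hB =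
      t / (c * ‖b‖ ^ 2 + t) * (Real.exp (-(c * t / (c * ‖b‖ ^ 2 + t)) * ‖b * mB + a * hA‖ ^ 2) *
        complexGaussianDensity t mA hA) := by
    intro hA
    simp_rw [mul_right_comm _ (complexGaussianDensity t mA hA)]
    rw [integral_mul_const,
      integral_exp_neg_mul_norm_add_mul_sq_mul_complexGaussianDensity hc ht, add_comm (b * mB)]
    ring_nf
  simp_rw [inner]
  rw [integral_const_mul, integral_exp_neg_mul_norm_add_mul_sq_mul_complexGaussianDensity
    (by positivity) ht, add_comm (b * mB)]
  field_simp
  ring_nf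

lemma mul_integral_integral_exp_neg_mul_norm_add_sq_mul_ricianDensity {K : ℝ} (hK : 0 ≤ K)
    (a b : ℂ) {ρ : ℝ} (hρ : 0 < ρ) :
    ρ * ∫ hA : ℂ, ∫ hB : ℂ, Real.exp (-(ρ / 4) * ‖a * hA + b * hB‖ ^ 2) *
        ricianDensity K hA * ricianDensity K hB =
      4 * (K + 1) / (‖a‖ ^ 2 + ‖b‖ ^ 2 + 4 * (K + 1) / ρ) *
        Real.exp (-K * ‖a + b‖ ^ 2 / (‖a‖ ^ 2 + ‖b‖ ^ 2 + 4 * (K + 1) / ρ)) := by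
  set m : ℂ := (Real.sqrt (K / (K + 1)) : ℂ)
  have hm : ‖a * m + b * m‖ ^ 2 = K / (K + 1) * ‖a + b‖ ^ 2 := by
    rw [← add_mul, norm_mul, mul_pow, Complex.norm_real, Real.norm_eq_abs, sq_abs,
      Real.sq_sqrt (by positivity), mul_comm]
  simp only [ricianDensity_eq_complexGaussianDensity]
  rw [integral_integral_exp_neg_mul_norm_add_sq_mul_complexGaussianDensity (by positivity)
    (by positivity), hm]
  field_simp

/-- high-SNR form of equation (8) of the paper; without adaptive
network coding the pairwise error events decay as `SNR⁻¹` with Rician-factor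
dependence `exp(−K|a+b|²/(|a|²+|b|²))`. -/
theorem rician_pairwise_error_snr_inv_limit (K : ℝ) (hK : 0 ≤ K) (a b : ℂ)
    (hab : 0 < (‖a‖) ^ 2 + (‖b‖) ^ 2) :
    Tendsto (fun ρ : ℝ =>
        ρ * ∫ hA : ℂ, ∫ hB : ℂ,
          Real.exp (-(ρ / 4) * (‖a * hA + b * hB‖) ^ 2) *
            ricianDensity K hA * ricianDensity K hB)
      atTop
      (nhds ((4 * (K + 1) / ((‖a‖) ^ 2 + (‖b‖) ^ 2)) *
        Real.exp (-K * (‖a + b‖) ^ 2 /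
          ((‖a‖) ^ 2 + (‖b‖) ^ 2)))) := by
  set s := ‖a‖ ^ 2 + ‖b‖ ^ 2
  have hcont : ContinuousAt
      (fun x : ℝ => 4 * (K + 1) / (s + x) * Real.exp (-K * ‖a + b‖ ^ 2 / (s + x))) 0 := by
    have hs : s + 0 ≠ 0 := by simpa using hab.ne'
    fun_prop (disch := exact hs)
  have hlim : Tendsto (fun ρ : ℝ => 4 * (K + 1) / ρ) atTop (nhds 0) :=
    tendsto_const_nhds.div_atTop tendsto_id
  have hG := hcont.tendsto.comp hlim
  rw [add_zero] at hG
  refine hG.congr' ?_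
  filter_upwards [eventually_gt_atTop 0] with ρ hρ using
    (mul_integral_integral_exp_neg_mul_norm_add_sq_mul_ricianDensity hK a b hρ).symm
end

section
/- Let K ≥ 0 with Rician density f_K(h) = ((K+1)/π) · exp(−(K+1)·|h − √(K/(K+1))|²) on ℂ. Fix h_A ∈ ℂ, s' ∈ ℂ, reals t > 0 and δ > 0, and set c = h_A·s' + √(K/(K+1)) and R = K + 1 + t. If δ·|h_A| > (K+1)·|c|/R, then ∫_{{h_B ∈ ℂ : |h_B + h_A·s'| ≥ δ·|h_A|}} exp(−t·|h_B + h_A·s'|²) · f_K(h_B) dh_B ≤ ((K+1)/R) · (δ·|h_A|/(δ·|h_A| − (K+1)·|c|/R)) · exp(−R·(δ·|h_A| − (K+1)·|c|/R)²) · exp(−t·(K+1)·|c|²/R). -/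
open MeasureTheory Set

/-! After the translation `x = h_B + h_A s'`, completing the square turns the integrand into
`((K+1)/π) e^{-t(K+1)|c|²/R} e^{-R|x - a|²}` with `a = ((K+1)/R) c`, to be integrated over
`|x| ≥ r := δ|h_A|`. There `|x - a| ≥ |x| - |a| ≥ 0`, and since `y ↦ y/(y - |a|)` decreases,
`e^{-R|x - a|²} ≤ (r/(r - |a|)) ((|x| - |a|)/|x|) e^{-R(|x| - |a|)²}`. In polar coordinates the
factor `1/|x|` cancels the Jacobian, leaving the elementary integral
`∫_r^∞ (y - |a|) e^{-R(y - |a|)²} dy = e^{-R(r - |a|)²}/(2R)`. -/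

open Filter Real Topology

theorem mul_norm_sq_add_mul_norm_sub_sq {E : Type*} [NormedAddCommGroup E]
    [InnerProductSpace ℝ E] {s t : ℝ} (hst : t + s ≠ 0) (x c : E) :
    t * ‖x‖ ^ 2 + s * ‖x - c‖ ^ 2 =
      (t + s) * ‖x - (s / (t + s)) • c‖ ^ 2 + t * s / (t + s) * ‖c‖ ^ 2 := by
  rw [norm_sub_sq_real, norm_sub_sq_real, norm_smul, inner_smul_right, Real.norm_eq_abs,
    mul_pow, sq_abs]
  field_simp
  ring

theorem integral_Ioi_sub_mul_exp_neg_mul_sub_sq {R b r : ℝ} (hR : 0 < R) (hbr : b ≤ r) :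
    IntegrableOn (fun y => (y - b) * exp (-R * (y - b) ^ 2)) (Ioi r) ∧
      ∫ y in Ioi r, (y - b) * exp (-R * (y - b) ^ 2) = exp (-R * (r - b) ^ 2) / (2 * R) := by
  have hderiv : ∀ y ∈ Ici r, HasDerivAt (fun y => -(exp (-R * (y - b) ^ 2) / (2 * R)))
      ((y - b) * exp (-R * (y - b) ^ 2)) y := fun y _ => by
    have hsq : HasDerivAt (fun y => -R * (y - b) ^ 2) (-R * (2 * (y - b))) y := by
      simpa using (((hasDerivAt_id y).sub_const b).pow 2).const_mul (-R)
    refine (hsq.exp.div_const (2 * R)).neg.congr_deriv ?_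
    field_simp
  have hnonneg : ∀ y ∈ Ioi r, 0 ≤ (y - b) * exp (-R * (y - b) ^ 2) := fun y hy =>
    mul_nonneg (by linarith [mem_Ioi.1 hy]) (exp_nonneg _)
  have hlim : Tendsto (fun y => -(exp (-R * (y - b) ^ 2) / (2 * R))) atTop (𝓝 0) := by
    have hsq : Tendsto (fun y : ℝ => (y - b) ^ 2) atTop atTop :=
      (tendsto_pow_atTop two_ne_zero).comp (tendsto_atTop_add_const_right atTop (-b) tendsto_id)
    simpa using ((tendsto_exp_atBot.comp
      (hsq.const_mul_atTop_of_neg (neg_lt_zero.2 hR))).div_const (2 * R)).neg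
  refine ⟨integrableOn_Ioi_deriv_of_nonneg' hderiv hnonneg hlim, ?_⟩
  rw [integral_Ioi_of_hasDerivAt_of_nonneg' hderiv hnonneg hlim]
  ring

theorem exp_neg_mul_norm_sub_sq_le {E : Type*} [SeminormedAddCommGroup E] {R r : ℝ}
    (hR : 0 ≤ R) {a x : E} (ha : ‖a‖ < r) (hx : r ≤ ‖x‖) :
    exp (-R * ‖x - a‖ ^ 2) ≤
      r / (r - ‖a‖) * ((‖x‖ - ‖a‖) / ‖x‖ * exp (-R * (‖x‖ - ‖a‖) ^ 2)) := by
  have hgap : 0 < r - ‖a‖ := sub_pos.2 ha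
  have hxpos : 0 < ‖x‖ := (norm_nonneg a).trans_lt (ha.trans_le hx)
  have hexp : exp (-R * ‖x - a‖ ^ 2) ≤ exp (-R * (‖x‖ - ‖a‖) ^ 2) := by
    have hsq : (‖x‖ - ‖a‖) ^ 2 ≤ ‖x - a‖ ^ 2 :=
      pow_le_pow_left₀ (by linarith) (norm_sub_norm_le x a) 2
    exact exp_le_exp.2 (by nlinarith)
  have hratio : 1 ≤ r / (r - ‖a‖) * ((‖x‖ - ‖a‖) / ‖x‖) := by
    rw [div_mul_div_comm, one_le_div (mul_pos hgap hxpos)]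
    nlinarith [norm_nonneg a]
  calc exp (-R * ‖x - a‖ ^ 2) ≤ 1 * exp (-R * (‖x‖ - ‖a‖) ^ 2) := by rwa [one_mul]
    _ ≤ _ := by rw [← mul_assoc]; gcongr

theorem indicator_setOf_le_norm {E : Type*} [Norm E] (f : ℝ → ℝ) (r : ℝ) :
    {x : E | r ≤ ‖x‖}.indicator (fun x => f ‖x‖) = fun x => (Ici r).indicator f ‖x‖ := by
  ext x
  by_cases hx : r ≤ ‖x‖ <;> simp [hx]

namespace Complex

theorem integral_fun_norm (f : ℝ → ℝ) :
    ∫ x : ℂ, f ‖x‖ = 2 * π * ∫ y in Ioi (0 : ℝ), y * f y := by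
  rw [integral_fun_norm_addHaar volume f]
  simp [finrank_real_complex, volume_ball, mul_assoc, measureReal_def]

theorem integrable_fun_norm_iff {f : ℝ → ℝ} :
    Integrable (fun x : ℂ => f ‖x‖) ↔ IntegrableOn (fun y => y * f y) (Ioi 0) := by
  simp [integrable_fun_norm_addHaar volume, finrank_real_complex]

theorem setIntegral_setOf_le_norm (f : ℝ → ℝ) {r : ℝ} (hr : 0 < r) :
    ∫ x in {x : ℂ | r ≤ ‖x‖}, f ‖x‖ = 2 * π * ∫ y in Ioi r, y * f y := by
  rw [← integral_indicator (measurableSet_le measurable_const measurable_norm),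
    indicator_setOf_le_norm, integral_fun_norm]
  simp_rw [← indicator_mul_right (Ici r) (fun y : ℝ => y) f]
  rw [setIntegral_indicator measurableSet_Ici, inter_eq_right.2 (Ici_subset_Ioi.2 hr),
    integral_Ici_eq_integral_Ioi]

theorem integrableOn_setOf_le_norm_iff {f : ℝ → ℝ} {r : ℝ} (hr : 0 < r) :
    IntegrableOn (fun x : ℂ => f ‖x‖) {x | r ≤ ‖x‖} ↔ IntegrableOn (fun y => y * f y) (Ioi r) := by
  rw [← integrable_indicator_iff (measurableSet_le measurable_const measurable_norm),
    indicator_setOf_le_norm, integrable_fun_norm_iff]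
  simp_rw [← indicator_mul_right (Ici r) (fun y : ℝ => y) f]
  rw [integrableOn_indicator_iff measurableSet_Ici, inter_eq_left.2 (Ici_subset_Ioi.2 hr),
    integrableOn_Ici_iff_integrableOn_Ioi]

theorem setIntegral_exp_neg_mul_norm_sub_sq_le {R r : ℝ} (hR : 0 < R) {a : ℂ} (ha : ‖a‖ < r) :
    ∫ x in {x : ℂ | r ≤ ‖x‖}, Real.exp (-R * ‖x - a‖ ^ 2) ≤
      π / R * (r / (r - ‖a‖)) * Real.exp (-R * (r - ‖a‖) ^ 2) := by
  have hr : 0 < r := (norm_nonneg a).trans_lt ha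
  set b := ‖a‖
  set g : ℝ → ℝ := fun y => r / (r - b) * ((y - b) / y * Real.exp (-R * (y - b) ^ 2))
  have hg : ∀ y ∈ Ioi r, y * g y = r / (r - b) * ((y - b) * Real.exp (-R * (y - b) ^ 2)) :=
    fun y hy => by
      have : y ≠ 0 := (hr.trans hy).ne'
      simp only [g]
      field_simp
  obtain ⟨hint, hval⟩ := integral_Ioi_sub_mul_exp_neg_mul_sub_sq hR ha.le
  have hgint : IntegrableOn (fun x : ℂ => g ‖x‖) {x | r ≤ ‖x‖} :=
    (integrableOn_setOf_le_norm_iff hr).2 <|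
      IntegrableOn.congr_fun (hint.const_mul _) (fun y hy => (hg y hy).symm) measurableSet_Ioi
  have hle : ∀ᵐ x ∂volume.restrict {x : ℂ | r ≤ ‖x‖}, Real.exp (-R * ‖x - a‖ ^ 2) ≤ g ‖x‖ :=
    (ae_restrict_iff' (measurableSet_le measurable_const measurable_norm)).2 <|
      .of_forall fun x hx => exp_neg_mul_norm_sub_sq_le hR.le ha hx
  calc ∫ x in {x : ℂ | r ≤ ‖x‖}, Real.exp (-R * ‖x - a‖ ^ 2)
      ≤ ∫ x in {x : ℂ | r ≤ ‖x‖}, g ‖x‖ :=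
        integral_mono_of_nonneg (.of_forall fun _ => (Real.exp_pos _).le) hgint hle
    _ = 2 * π * (r / (r - b) * (Real.exp (-R * (r - b) ^ 2) / (2 * R))) := by
        rw [setIntegral_setOf_le_norm g hr, setIntegral_congr_fun measurableSet_Ioi hg,
          integral_const_mul, hval]
    _ = π / R * (r / (r - b)) * Real.exp (-R * (r - b) ^ 2) := by
        field_simp

end Complex

theorem rician_inner_integral_upper_bound_general
    (K : ℝ) (hK : 0 ≤ K) (hA : ℂ) (s' : ℂ) (t δ : ℝ) (ht : 0 < t)
    (c : ℂ) (hc : c = hA * s' + (Real.sqrt (K / (K + 1)) : ℂ))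
    (R : ℝ) (hR : R = K + 1 + t)
    (hgap : (K + 1) * ‖c‖ / R < δ * ‖hA‖) :
    (∫ hB in {hB : ℂ | δ * ‖hA‖ ≤ ‖hB + hA * s'‖},
        Real.exp (-t * (‖hB + hA * s'‖) ^ 2) * ricianDensity K hB) ≤
      ((K + 1) / R) *
        (δ * ‖hA‖ /
          (δ * ‖hA‖ - (K + 1) * ‖c‖ / R)) *
        Real.exp (-R * (δ * ‖hA‖ - (K + 1) * ‖c‖ / R) ^ 2) *
        Real.exp (-t * (K + 1) * (‖c‖) ^ 2 / R) := by
  have hRpos : 0 < R := by linarith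
  set a : ℂ := ((K + 1) / R) • c
  have hnorm_a : ‖a‖ = (K + 1) * ‖c‖ / R := by
    rw [norm_smul, Real.norm_of_nonneg (by positivity)]
    ring
  have hintegrand : ∀ hB : ℂ, exp (-t * ‖hB + hA * s'‖ ^ 2) * ricianDensity K hB =
      (K + 1) / π * exp (-t * (K + 1) * ‖c‖ ^ 2 / R) * exp (-R * ‖hB + hA * s' - a‖ ^ 2) := by
    intro hB
    have hcentre : hB - (Real.sqrt (K / (K + 1)) : ℂ) = hB + hA * s' - c := by rw [hc]; ring
    have hsquare := mul_norm_sq_add_mul_norm_sub_sq (s := K + 1) (t := t) (by linarith)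
      (hB + hA * s') c
    rw [show t + (K + 1) = R by linarith] at hsquare
    rw [ricianDensity, hcentre, mul_left_comm, ← exp_add, mul_assoc, ← exp_add]
    congr 2
    linear_combination -hsquare
  calc _ = (K + 1) / π * exp (-t * (K + 1) * ‖c‖ ^ 2 / R) *
        ∫ x in {x : ℂ | δ * ‖hA‖ ≤ ‖x‖}, exp (-R * ‖x - a‖ ^ 2) := by
        simp_rw [hintegrand]
        rw [integral_const_mul]
        congr 1
        exact (measurePreserving_add_right volume (hA * s')).setIntegral_preimage_emb
          (measurableEmbedding_addRight _) (fun x => exp (-R * ‖x - a‖ ^ 2)) {x | δ * ‖hA‖ ≤ ‖x‖}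
    _ ≤ (K + 1) / π * exp (-t * (K + 1) * ‖c‖ ^ 2 / R) *
        (π / R * (δ * ‖hA‖ / (δ * ‖hA‖ - ‖a‖)) * exp (-R * (δ * ‖hA‖ - ‖a‖) ^ 2)) := by
        gcongr
        exact Complex.setIntegral_exp_neg_mul_norm_sub_sq_le hRpos (hnorm_a ▸ hgap)
    _ = _ := by
        rw [hnorm_a]
        field_simp

/-- (the inner-integral upper bound, equation (16) in the proof of
Theorem 1 of the paper, with corrected constants), where `c = h_A s' + √(K/(K+1))`
and `R = K + 1 + t`, assuming `δ|h_A| > (K+1)|c|/R`. -/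
theorem rician_inner_integral_upper_bound
    (K : ℝ) (hK : 0 ≤ K) (hA : ℂ) (s' : ℂ) (t δ : ℝ) (ht : 0 < t) (hδ : 0 < δ)
    (c : ℂ) (hc : c = hA * s' + (Real.sqrt (K / (K + 1)) : ℂ))
    (R : ℝ) (hR : R = K + 1 + t)
    (hgap : (K + 1) * ‖c‖ / R < δ * ‖hA‖) :
    (∫ hB in {hB : ℂ | δ * ‖hA‖ ≤ ‖hB + hA * s'‖},
        Real.exp (-t * (‖hB + hA * s'‖) ^ 2) * ricianDensity K hB) ≤
      ((K + 1) / R) *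
        (δ * ‖hA‖ /
          (δ * ‖hA‖ - (K + 1) * ‖c‖ / R)) *
        Real.exp (-R * (δ * ‖hA‖ - (K + 1) * ‖c‖ / R) ^ 2) *
        Real.exp (-t * (K + 1) * (‖c‖) ^ 2 / R) :=
  rician_inner_integral_upper_bound_general K hK hA s' t δ ht c hc R hR hgap
end
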